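/- Let u_1,...,u_M be nonnegative uniform good values and S the set of all M goods with n agents, n ≤ M. Consider the greedy process: while there exists j ∈ S with u_j > a(S), remove j from S, where a(S) = (Σ_{j∈S} u_j)/(n−(M−|S|)). Then for such j, a(S \ {j}) ≤ a(S); moreover the process terminates before S becomes empty (specifically it terminates while n−(M−|S|) ≥ 1), and the terminal set S is independent of the order of removals. -/
import Mathlib


open Finset

/-- `a(S) = (Σ_{j∈S} u_j)/(|S| − (M−n))` for a set `S` of goods. -/
noncomputable def aS (n M : ℕ) (u : Fin M → ℝ) (S : Finset (Fin M)) : ℝ :=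
  (∑ j ∈ S, u j) / ((S.card - (M - n) : ℕ) : ℝ)

/-- One step of the greedy process: remove some `j ∈ S` with `u_j > a(S)`. -/
inductive RemoveStep (n M : ℕ) (u : Fin M → ℝ) :
    Finset (Fin M) → Finset (Fin M) → Prop
  | step (S : Finset (Fin M)) (j : Fin M) (hj : j ∈ S)
      (h : aS n M u S < u j) : RemoveStep n M u S (S.erase j)

/-- The greedy process on nonnegative uniform values: removing `j ∈ S` with
`u_j > a(S)` does not increase `a(S)`; and any maximal removal sequence starting
from the set of all goods terminates while `n − (M − |S|) ≥ 1` (in particular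
before `S` is empty), at a terminal set that is independent of the order of
removals. -/
theorem greedy_process (n M : ℕ) (hn : 0 < n) (hnM : n ≤ M)
    (u : Fin M → ℝ) (hu : ∀ j, 0 ≤ u j) :
    (∀ (S : Finset (Fin M)) (j : Fin M), j ∈ S → M - n + 1 < S.card →
        aS n M u S < u j → aS n M u (S.erase j) ≤ aS n M u S) ∧
    (∀ S₁ S₂ : Finset (Fin M),
        Relation.ReflTransGen (RemoveStep n M u) Finset.univ S₁ →
        (∀ j ∈ S₁, u j ≤ aS n M u S₁) →
        Relation.ReflTransGen (RemoveStep n M u) Finset.univ S₂ →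
        (∀ j ∈ S₂, u j ≤ aS n M u S₂) →
        S₁ = S₂ ∧ M - n < S₁.card) := by
  -- the key monotonicity fact
  have key : ∀ (S : Finset (Fin M)) (j : Fin M), j ∈ S → M - n + 1 < S.card →
      aS n M u S < u j → aS n M u (S.erase j) ≤ aS n M u S := by
    intro S j hj hcard hlt
    have hk2 : 2 ≤ S.card - (M - n) := by omega
    set k := S.card - (M - n) with hk
    have hek : (S.erase j).card - (M - n) = k - 1 := by
      rw [Finset.card_erase_of_mem hj]; omega
    have hsum : ∑ i ∈ S.erase j, u i = (∑ i ∈ S, u i) - u j := by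
      have := Finset.add_sum_erase S u hj
      linarith
    unfold aS at hlt ⊢
    rw [hek, hsum]
    have hkR : (0:ℝ) < (k:ℝ) := by exact_mod_cast (by omega : 0 < k)
    have hk1R : (0:ℝ) < ((k-1:ℕ):ℝ) := by exact_mod_cast (by omega : 0 < k - 1)
    have hcast : ((k-1:ℕ):ℝ) = (k:ℝ) - 1 := by
      have : (1:ℕ) ≤ k := by omega
      push_cast [Nat.cast_sub this]
      ring
    have hsumlt : (∑ i ∈ S, u i) < u j * (k:ℝ) := (div_lt_iff₀ hkR).mp hlt
    rw [div_le_div_iff₀ hk1R hkR, hcast]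
    nlinarith
  -- no step is possible when the denominator is 1
  have bdry : ∀ S : Finset (Fin M), S.card = M - n + 1 → ∀ j ∈ S, ¬ aS n M u S < u j := by
    intro S hc j hj
    unfold aS
    rw [hc]
    have h1 : (M - n + 1) - (M - n) = 1 := by omega
    rw [h1]
    simp only [Nat.cast_one, div_one]
    exact not_lt.mpr (Finset.single_le_sum (fun i _ => hu i) hj)
  -- from any set where a step can be taken, a step removing another removable element remains
  have step_ineq : ∀ (S : Finset (Fin M)) (i j : Fin M), i ∈ S → j ∈ S →
      aS n M u S < u i → aS n M u S < u j → aS n M u (S.erase i) < u j := by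
    intro S i j hi hj hui huj
    rcases lt_trichotomy S.card (M - n + 1) with h | h | h
    · have h0 : S.card - (M-n) = 0 := by omega
      have h0' : (S.erase i).card - (M-n) = 0 := by
        rw [Finset.card_erase_of_mem hi]; omega
      unfold aS at huj ⊢
      rw [h0'] at *
      rw [h0] at huj
      simpa using huj
    · exact absurd hui (bdry S h i hi)
    · exact lt_of_le_of_lt (key S i hi h hui) huj
  -- the diamond property
  have diamond : ∀ a b c, RemoveStep n M u a b → RemoveStep n M u a c →
      ∃ d, Relation.ReflGen (RemoveStep n M u) b d ∧
        Relation.ReflTransGen (RemoveStep n M u) c d := by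
    intro a b c hab hac
    cases hab with | step i hi hui =>
    cases hac with | step j hj huj =>
    by_cases hij : i = j
    · subst hij; exact ⟨_, Relation.ReflGen.refl, Relation.ReflTransGen.refl⟩
    · refine ⟨(a.erase i).erase j, ?_, ?_⟩
      · have hja : j ∈ a.erase i := Finset.mem_erase.mpr ⟨fun h => hij h.symm, hj⟩
        exact Relation.ReflGen.single
          (RemoveStep.step _ j hja (step_ineq a i j hi hj hui huj))
      · have hia : i ∈ a.erase j := Finset.mem_erase.mpr ⟨hij, hi⟩
        have hst := RemoveStep.step (a.erase j) i hia (step_ineq a j i hj hi huj hui)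
        rw [Finset.erase_right_comm] at hst
        exact Relation.ReflTransGen.single hst
  -- cardinality invariant along the process
  have inv : ∀ S, Relation.ReflTransGen (RemoveStep n M u) Finset.univ S →
      M - n < S.card := by
    intro S h
    induction h with
    | refl => simp [Finset.card_univ]; omega
    | @tail b c hab hbc ih =>
      cases hbc with
      | step j hj hlt =>
        rw [Finset.card_erase_of_mem hj]
        by_contra hcon
        have hc : b.card = M - n + 1 := by omega
        exact bdry b hc j hj hlt
  refine ⟨key, ?_⟩
  intro S₁ S₂ h1 ht1 h2 ht2
  have hnf : ∀ S : Finset (Fin M), (∀ j ∈ S, u j ≤ aS n M u S) → ∀ T,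
      Relation.ReflTransGen (RemoveStep n M u) S T → T = S := by
    intro S hS T h
    rcases Relation.ReflTransGen.cases_head h with rfl | ⟨c, hc, _⟩
    · rfl
    · cases hc with
      | step j hj hlt => exact absurd hlt (not_lt.mpr (hS j hj))
  obtain ⟨d, hd1, hd2⟩ := Relation.church_rosser diamond h1 h2
  have e1 := hnf S₁ ht1 d hd1
  have e2 := hnf S₂ ht2 d hd2
  exact ⟨e1 ▸ e2 ▸ rfl, inv S₁ h1⟩
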